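/- Let 𝒜 : ℝ^d → ℂ^{n×n} be a matrix-valued function each of whose entries is real-analytic on ℝ^d, with 𝒜(ω) Hermitian for every ω, and let Λ(ω) := λ_min(𝒜(ω)). Let ω₀ ∈ ℝ^d be such that λ_min(𝒜(ω₀)) is a simple eigenvalue, and assume Λ is twice differentiable at ω₀. Let ∇²𝒜(ω₀) denote the (nd)×(nd) matrix, indexed by pairs (k,i) with k ∈ {1,…,d} and i ∈ {1,…,n}, whose entry at position ((k,i),(ℓ,j)) is ∂²𝒜_{ij}/∂ω_k∂ω_ℓ evaluated at ω₀; this matrix is Hermitian. Then the Hessian ∇²Λ(ω₀) satisfies λ_max(∇²Λ(ω₀)) ≤ λ_max(∇²𝒜(ω₀)); equivalently, D²Λ(ω₀)[p,p] ≤ λ_max(∇²𝒜(ω₀))·‖p‖² for every p ∈ ℝ^d. -/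

import Mathlib

/-!
Let `v` be a unit eigenvector for the simple eigenvalue `Λ(ω₀)`. By the Rayleigh principle
`Λ ω ≤ φ ω := Re (v* 𝒜(ω) v)` for all `ω`, with equality at `ω₀`, so `Λ - φ` has a maximum at
`ω₀` and `D²Λ(ω₀)[p,p] ≤ D²φ(ω₀)[p,p] = Re (x* ∇²𝒜(ω₀) x)` with `x = p ⊗ v`. Since `‖x‖ = ‖p‖`,
the Rayleigh principle for `∇²𝒜(ω₀)` bounds this by `λ_max(∇²𝒜(ω₀)) ‖p‖²`.

That `Λ` is `C²` at `ω₀` comes from the implicit function theorem applied to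
`(ω, t) ↦ det (t - 𝒜(ω))`, whose `t`-derivative at a simple root is nonzero.
-/

open Filter Topology Matrix Finset

section Calculus

variable {E F : Type*} [NormedAddCommGroup E] [NormedSpace ℝ E] [NormedAddCommGroup F]
  [NormedSpace ℝ F]

theorem IsLocalMax.deriv_deriv_nonpos {f : ℝ → ℝ} {a : ℝ} (h : IsLocalMax f a)
    (hc : ContinuousAt f a) : deriv (deriv f) a ≤ 0 := by
  by_contra! hpos
  -- `f'' a > 0` makes `a` a local minimum as well, so `f` is locally constant and `f'' a = 0`
  have hmin : IsLocalMin f a := isLocalMin_of_deriv_deriv_pos hpos h.deriv_eq_zero hc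
  have hconst : f =ᶠ[𝓝 a] fun _ => f a := (h.and hmin).mono fun x hx => le_antisymm hx.1 hx.2
  have : deriv f =ᶠ[𝓝 a] fun _ => 0 := by simpa using hconst.deriv
  exact hpos.ne' (by simpa using this.deriv_eq)

theorem deriv_deriv_comp_add_smul {f : E → F} {x : E} (hf : ContDiffAt ℝ 2 f x) (p : E) :
    deriv (deriv fun t : ℝ => f (x + t • p)) 0 = fderiv ℝ (fderiv ℝ f) x p p := by
  have hline : ∀ t : ℝ, HasDerivAt (fun s : ℝ => x + s • p) p t := fun t => by
    simpa using ((hasDerivAt_id t).smul_const p).const_add x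
  have hcont : Tendsto (fun t : ℝ => x + t • p) (𝓝 0) (𝓝 x) := by
    simpa using (hline 0).continuousAt.tendsto
  have hderiv : (deriv fun t : ℝ => f (x + t • p)) =ᶠ[𝓝 0]
      fun t => fderiv ℝ f (x + t • p) p := by
    filter_upwards [hcont.eventually (hf.eventually (by simp))] with t ht
    exact ((ht.differentiableAt two_ne_zero).hasFDerivAt.comp_hasDerivAt t (hline t)).deriv
  have hf' : HasFDerivAt (fderiv ℝ f) (fderiv ℝ (fderiv ℝ f) x) (x + (0 : ℝ) • p) := by
    simpa using
      ((hf.fderiv_right (m := 1) (by norm_num)).differentiableAt one_ne_zero).hasFDerivAt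
  rw [hderiv.deriv_eq]
  exact ((ContinuousLinearMap.apply ℝ F p).hasFDerivAt.comp_hasDerivAt 0
    (hf'.comp_hasDerivAt 0 (hline 0))).deriv

theorem IsLocalMax.fderiv_fderiv_apply_self_nonpos {f : E → ℝ} {x : E} (h : IsLocalMax f x)
    (hf : ContDiffAt ℝ 2 f x) (p : E) : fderiv ℝ (fderiv ℝ f) x p p ≤ 0 := by
  have hline : Tendsto (fun t : ℝ => x + t • p) (𝓝 0) (𝓝 x) := by
    simpa using (show Continuous fun t : ℝ => x + t • p by fun_prop).tendsto 0
  rw [← deriv_deriv_comp_add_smul hf p]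
  refine IsLocalMax.deriv_deriv_nonpos ?_ ?_
  · simpa [IsLocalMax, IsMaxFilter] using hline.eventually h
  · simpa [ContinuousAt, Function.comp_def] using hf.continuousAt.tendsto.comp hline

theorem fderiv_fderiv_apply_self_le_of_eventuallyLE {f g : E → ℝ} {x : E} (hle : f ≤ᶠ[𝓝 x] g)
    (heq : f x = g x) (hf : ContDiffAt ℝ 2 f x) (hg : ContDiffAt ℝ 2 g x) (p : E) :
    fderiv ℝ (fderiv ℝ f) x p p ≤ fderiv ℝ (fderiv ℝ g) x p p := by
  have hmax : IsLocalMax (f - g) x := hle.mono fun y hy => by simp [heq, hy]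
  have hsub := congrArg (· ![p, p]) (iteratedFDeriv_sub_apply hf hg)
  simp only [_root_.sub_apply, iteratedFDeriv_two_apply, Matrix.cons_val_zero, Matrix.cons_val_one,
    Matrix.cons_val_fin_one] at hsub
  linarith [hmax.fderiv_fderiv_apply_self_nonpos (hf.sub hg) p]

theorem iteratedFDeriv_two_apply_eq_sum {ι : Type*} [Fintype ι] [DecidableEq ι]
    (f : EuclideanSpace ℝ ι → F) (x p q : EuclideanSpace ℝ ι) :
    iteratedFDeriv ℝ 2 f x ![p, q] = ∑ k, ∑ l, (p k * q l) •
      iteratedFDeriv ℝ 2 f x ![EuclideanSpace.single k 1, EuclideanSpace.single l 1] := by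
  have hp := (EuclideanSpace.basisFun ι ℝ).sum_repr p
  have hq := (EuclideanSpace.basisFun ι ℝ).sum_repr q
  simp only [EuclideanSpace.basisFun_repr, EuclideanSpace.basisFun_apply] at hp hq
  simp only [iteratedFDeriv_two_apply, Matrix.cons_val_zero, Matrix.cons_val_one,
    Matrix.cons_val_fin_one]
  conv_lhs => rw [← hp, ← hq]
  simp only [map_sum, map_smul, _root_.sum_apply, _root_.smul_apply, Finset.smul_sum, smul_smul]
  rw [sum_comm]
  simp only [mul_comm (q _)]

theorem ContinuousLinearMap.isInvertible_of_apply_one_ne_zero {𝕜 : Type*}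
    [NontriviallyNormedField 𝕜] {L : 𝕜 →L[𝕜] 𝕜} (h : L 1 ≠ 0) : L.IsInvertible :=
  ⟨ContinuousLinearEquiv.unitsEquivAut 𝕜 (Units.mk0 _ h), ContinuousLinearMap.ext_ring (by simp)⟩

theorem hasDerivAt_prod_sub {n : Type*} [Fintype n] [DecidableEq n] (μ : n → ℝ) (i₀ : n) :
    HasDerivAt (fun t => ∏ i, (t - μ i)) (∏ i ∈ univ.erase i₀, (μ i₀ - μ i)) (μ i₀) := by
  have hsplit : (fun t => ∏ i, (t - μ i)) =
      fun t => (t - μ i₀) * ∏ i ∈ univ.erase i₀, (t - μ i) :=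
    funext fun t => (mul_prod_erase _ (fun i => t - μ i) (mem_univ i₀)).symm
  rw [hsplit]
  have hprod : HasDerivAt (fun t => ∏ i ∈ univ.erase i₀, (t - μ i)) _ (μ i₀) :=
    HasDerivAt.fun_finsetProd fun i _ => (hasDerivAt_id (μ i₀)).sub_const (μ i)
  simpa using ((hasDerivAt_id' (μ i₀)).sub_const (μ i₀)).fun_mul hprod

end Calculus

namespace Matrix

variable {n 𝕜 : Type*} [Fintype n] [RCLike 𝕜]

theorem re_star_dotProduct_self (x : n → 𝕜) : RCLike.re (star x ⬝ᵥ x) = ∑ i, ‖x i‖ ^ 2 := by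
  simp only [dotProduct, Pi.star_apply, RCLike.star_def, RCLike.conj_mul, map_sum]
  norm_cast

theorem norm_star_dotProduct_mulVec_le (D : Matrix n n 𝕜) {x : n → 𝕜} (hx : ∀ i, ‖x i‖ ≤ 1) :
    ‖star x ⬝ᵥ D *ᵥ x‖ ≤ ∑ i, ∑ j, ‖D i j‖ := by
  simp only [dotProduct, mulVec, Finset.mul_sum]
  refine (norm_sum_le _ _).trans
    (sum_le_sum fun i _ => (norm_sum_le _ _).trans (sum_le_sum fun j _ => ?_))
  rw [norm_mul, norm_mul, Pi.star_apply, norm_star]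
  calc ‖x i‖ * (‖D i j‖ * ‖x j‖) ≤ 1 * (‖D i j‖ * 1) := by gcongr <;> exact hx _
    _ = ‖D i j‖ := by ring

theorem star_dotProduct_mulVec_kron {ι : Type*} [Fintype ι] (M : Matrix (ι × n) (ι × n) 𝕜)
    (c : ι → 𝕜) (v : n → 𝕜) :
    star (fun a : ι × n => c a.1 * v a.2) ⬝ᵥ M *ᵥ (fun a => c a.1 * v a.2) =
      star v ⬝ᵥ (of fun i j => ∑ k, ∑ l, star (c k) * c l * M (k, i) (l, j)) *ᵥ v := by
  simp only [dotProduct, mulVec, Fintype.sum_prod_type, Finset.mul_sum, Finset.sum_mul,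
    Pi.star_apply, of_apply]
  rw [sum_comm]
  refine sum_congr rfl fun i _ => ((sum_congr rfl fun k _ => sum_comm).trans sum_comm).trans
    (sum_congr rfl fun j _ => sum_congr rfl fun k _ => sum_congr rfl fun l _ => ?_)
  rw [star_mul']
  ring

theorem iteratedFDeriv_star_dotProduct_mulVec {E : Type*} [NormedAddCommGroup E]
    [NormedSpace ℝ E] {A : E → Matrix n n 𝕜} {x : E} {k : ℕ}
    (hA : ∀ i j, ContDiffAt ℝ k (A · i j) x) (v : n → 𝕜) (m : Fin k → E) :
    iteratedFDeriv ℝ k (fun y => star v ⬝ᵥ A y *ᵥ v) x m =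
      star v ⬝ᵥ (of fun i j => iteratedFDeriv ℝ k (A · i j) x m) *ᵥ v := by
  have hsum : ∀ B : Matrix n n 𝕜, star v ⬝ᵥ B *ᵥ v = ∑ i, ∑ j, (star v i * v j) • B i j :=
    fun B => by
      simp only [dotProduct, mulVec, mul_sum, smul_eq_mul]
      exact sum_congr rfl fun i _ => sum_congr rfl fun j _ => by ring
  simp only [hsum]
  rw [iteratedFDeriv_fun_sum_apply fun i _ => ContDiffAt.sum fun j _ => (hA i j).const_smul _]
  simp only [_root_.sum_apply, of_apply]
  refine sum_congr rfl fun i _ => ?_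
  rw [iteratedFDeriv_fun_sum_apply fun j _ => (hA i j).const_smul _]
  simp only [_root_.sum_apply]
  refine sum_congr rfl fun j _ => ?_
  rw [iteratedFDeriv_const_smul_apply' (hA i j)]
  rfl

theorem contDiffAt_star_dotProduct_mulVec {E : Type*} [NormedAddCommGroup E] [NormedSpace ℝ E]
    {A : E → Matrix n n 𝕜} {x : E} {k : WithTop ℕ∞} (hA : ∀ i j, ContDiffAt ℝ k (A · i j) x)
    (v : n → 𝕜) : ContDiffAt ℝ k (fun y => star v ⬝ᵥ A y *ᵥ v) x := by
  simp only [dotProduct, mulVec]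
  fun_prop

theorem _root_.ContDiffAt.matrix_det {E : Type*} [NormedAddCommGroup E] [NormedSpace ℝ E]
    [DecidableEq n] {M : E → Matrix n n 𝕜} {x : E} {k : WithTop ℕ∞}
    (hM : ∀ i j, ContDiffAt ℝ k (M · i j) x) : ContDiffAt ℝ k (fun y => (M y).det) x := by
  simp only [det_apply]
  exact ContDiffAt.sum fun σ _ => (contDiffAt_prod fun i _ => hM _ _).const_smul _

variable [DecidableEq n] {B C : Matrix n n 𝕜}

theorem re_star_dotProduct_algebraMap_mulVec (r : ℝ) (x : n → 𝕜) :
    RCLike.re (star x ⬝ᵥ algebraMap ℝ (Matrix n n 𝕜) r *ᵥ x) = r * ∑ i, ‖x i‖ ^ 2 := by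
  rw [Algebra.algebraMap_eq_smul_one, smul_mulVec, one_mulVec, dotProduct_smul,
    RCLike.real_smul_eq_coe_mul, RCLike.re_ofReal_mul, re_star_dotProduct_self]

namespace IsHermitian

open scoped MatrixOrder

theorem re_dotProduct_mulVec_le (hB : B.IsHermitian) (x : n → 𝕜) :
    RCLike.re (star x ⬝ᵥ B *ᵥ x) ≤ (⨆ i, hB.eigenvalues i) * ∑ i, ‖x i‖ ^ 2 := by
  have hle : B ≤ algebraMap ℝ (Matrix n n 𝕜) (⨆ i, hB.eigenvalues i) := by
    refine le_algebraMap_of_spectrum_le (fun r hr => ?_) hB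
    obtain ⟨i, rfl⟩ := hB.spectrum_real_eq_range_eigenvalues ▸ hr
    exact le_ciSup (Set.finite_range _).bddAbove i
  have := (Matrix.le_iff.mp hle).re_dotProduct_nonneg x
  rw [sub_mulVec, dotProduct_sub, map_sub, re_star_dotProduct_algebraMap_mulVec] at this
  linarith

theorem le_re_dotProduct_mulVec (hB : B.IsHermitian) (x : n → 𝕜) :
    (⨅ i, hB.eigenvalues i) * ∑ i, ‖x i‖ ^ 2 ≤ RCLike.re (star x ⬝ᵥ B *ᵥ x) := by
  have hle : algebraMap ℝ (Matrix n n 𝕜) (⨅ i, hB.eigenvalues i) ≤ B := by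
    refine algebraMap_le_of_le_spectrum (fun r hr => ?_) hB
    obtain ⟨i, rfl⟩ := hB.spectrum_real_eq_range_eigenvalues ▸ hr
    exact ciInf_le (Set.finite_range _).bddBelow i
  have := (Matrix.le_iff.mp hle).re_dotProduct_nonneg x
  rw [sub_mulVec, dotProduct_sub, map_sub, re_star_dotProduct_algebraMap_mulVec] at this
  linarith

theorem sum_norm_eigenvectorBasis_sq (hB : B.IsHermitian) (i : n) :
    ∑ j, ‖hB.eigenvectorBasis i j‖ ^ 2 = 1 := by
  rw [← EuclideanSpace.norm_sq_eq, hB.eigenvectorBasis.norm_eq_one, one_pow]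

theorem re_star_dotProduct_mulVec_eigenvectorBasis (hB : B.IsHermitian) (i : n) :
    RCLike.re (star ⇑(hB.eigenvectorBasis i) ⬝ᵥ B *ᵥ ⇑(hB.eigenvectorBasis i)) =
      hB.eigenvalues i := by
  rw [hB.mulVec_eigenvectorBasis, dotProduct_smul, RCLike.real_smul_eq_coe_mul,
    RCLike.re_ofReal_mul, re_star_dotProduct_self, sum_norm_eigenvectorBasis_sq, mul_one]

theorem iInf_eigenvalues_le_add [Nonempty n] (hB : B.IsHermitian) (hC : C.IsHermitian) :
    ⨅ i, hC.eigenvalues i ≤ (⨅ i, hB.eigenvalues i) + ∑ i, ∑ j, ‖C i j - B i j‖ := by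
  obtain ⟨i, hi⟩ := exists_eq_ciInf_of_finite (f := hB.eigenvalues)
  set v := ⇑(hB.eigenvectorBasis i)
  have hv : ∀ j, ‖v j‖ ≤ 1 := fun j =>
    (PiLp.norm_apply_le _ j).trans (hB.eigenvectorBasis.norm_eq_one i).le
  calc ⨅ i, hC.eigenvalues i ≤ RCLike.re (star v ⬝ᵥ C *ᵥ v) := by
        simpa [v, sum_norm_eigenvectorBasis_sq] using hC.le_re_dotProduct_mulVec v
    _ = RCLike.re (star v ⬝ᵥ B *ᵥ v) + RCLike.re (star v ⬝ᵥ (C - B) *ᵥ v) := by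
        rw [sub_mulVec, dotProduct_sub, map_sub]; ring
    _ ≤ (⨅ i, hB.eigenvalues i) + ∑ i, ∑ j, ‖C i j - B i j‖ := by
        rw [re_star_dotProduct_mulVec_eigenvectorBasis, hi]
        exact add_le_add_right
          ((RCLike.re_le_norm _).trans (norm_star_dotProduct_mulVec_le _ hv)) _

theorem re_eval_charpoly (hB : B.IsHermitian) (t : ℝ) :
    RCLike.re (B.charpoly.eval (t : 𝕜)) = ∏ i, (t - hB.eigenvalues i) := by
  rw [hB.charpoly_eq, Polynomial.eval_prod]
  simp only [Polynomial.eval_sub, Polynomial.eval_X, Polynomial.eval_C]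
  norm_cast

end IsHermitian

theorem continuousAt_iInf_eigenvalues {X : Type*} [TopologicalSpace X] {A : X → Matrix n n 𝕜}
    (hA : ∀ x, (A x).IsHermitian) {x₀ : X} (hcont : ∀ i j, ContinuousAt (A · i j) x₀) :
    ContinuousAt (fun x => ⨅ i, (hA x).eigenvalues i) x₀ := by
  cases isEmpty_or_nonempty n
  · simp [continuousAt_const]
  set g : X → ℝ := fun x => ∑ i, ∑ j, ‖A x i j - A x₀ i j‖
  have hg : Tendsto g (𝓝 x₀) (𝓝 0) := by
    have : ContinuousAt g x₀ := by fun_prop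
    simpa [g] using this.tendsto
  refine tendsto_iff_norm_sub_tendsto_zero.mpr
    (squeeze_zero (fun _ => norm_nonneg _) (fun x => ?_) hg)
  rw [Real.norm_eq_abs, abs_sub_le_iff]
  constructor
  · linarith [(hA x₀).iInf_eigenvalues_le_add (hA x)]
  · have := (hA x).iInf_eigenvalues_le_add (hA x₀)
    simp only [norm_sub_rev (A x₀ _ _)] at this
    linarith

theorem contDiffAt_iInf_eigenvalues {E : Type*} [NormedAddCommGroup E] [NormedSpace ℝ E]
    [CompleteSpace E] {A : E → Matrix n n 𝕜} (hA : ∀ x, (A x).IsHermitian) {x₀ : E}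
    {k : WithTop ℕ∞} (hk : k ≠ 0) (hAk : ∀ i j, ContDiffAt ℝ k (A · i j) x₀)
    (hsimple : ∃! i, (hA x₀).eigenvalues i = ⨅ j, (hA x₀).eigenvalues j) :
    ContDiffAt ℝ k (fun x => ⨅ i, (hA x).eigenvalues i) x₀ := by
  set Λ := fun x => ⨅ i, (hA x).eigenvalues i
  obtain ⟨i₀, hi₀, huniq⟩ := hsimple
  have : Nonempty n := ⟨i₀⟩
  set q : E × ℝ → ℝ := fun z => RCLike.re ((A z.1).charpoly.eval (z.2 : 𝕜))
  have hq : ContDiffAt ℝ k q (x₀, Λ x₀) := by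
    simp only [q, eval_charpoly]
    refine (RCLike.reCLM (K := 𝕜)).contDiff.contDiffAt.comp _
      (ContDiffAt.matrix_det fun i j => ?_)
    have hAij : ContDiffAt ℝ k (fun z : E × ℝ => A z.1 i j) (x₀, Λ x₀) :=
      (hAk i j).comp (x₀, Λ x₀) contDiffAt_fst
    by_cases hij : i = j
    · simp only [hij, sub_apply, scalar_apply, diagonal_apply_eq]
      exact ((RCLike.ofRealCLM (K := 𝕜)).contDiff.contDiffAt.comp _ contDiffAt_snd).sub
        (hij ▸ hAij)
    · simp only [sub_apply, scalar_apply, diagonal_apply_ne _ hij, zero_sub]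
      exact hAij.neg
  have hroot : ∀ x, q (x, Λ x) = 0 := by
    intro x
    obtain ⟨i, hi⟩ := exists_eq_ciInf_of_finite (f := (hA x).eigenvalues)
    simp only [q, (hA x).re_eval_charpoly]
    exact prod_eq_zero (mem_univ i) (by simp [Λ, hi])
  have hderiv : HasDerivAt (fun t => q (x₀, t))
      (∏ i ∈ univ.erase i₀, (Λ x₀ - (hA x₀).eigenvalues i)) (Λ x₀) := by
    simpa [q, (hA x₀).re_eval_charpoly, Λ, ← hi₀] using
      hasDerivAt_prod_sub (hA x₀).eigenvalues i₀
  have hinv : (fderiv ℝ q (x₀, Λ x₀) ∘L .inr ℝ E ℝ).IsInvertible := by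
    refine ContinuousLinearMap.isInvertible_of_apply_one_ne_zero ?_
    have hline : HasDerivAt (fun t => q (x₀, t)) (fderiv ℝ q (x₀, Λ x₀) (0, 1)) (Λ x₀) :=
      (hq.differentiableAt hk).hasFDerivAt.comp_hasDerivAt _
        ((hasDerivAt_const _ x₀).prodMk (hasDerivAt_id _))
    simp only [ContinuousLinearMap.comp_apply, ContinuousLinearMap.inr_apply,
      hline.unique hderiv]
    refine prod_ne_zero_iff.mpr fun i hi => sub_ne_zero.mpr fun h => (mem_erase.mp hi).1 ?_
    exact huniq i (by simp [Λ, ← h])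
  have hΛ : ContinuousAt Λ x₀ :=
    continuousAt_iInf_eigenvalues hA fun i j => (hAk i j).continuousAt
  have hev : Λ =ᶠ[𝓝 x₀] hq.implicitFunction hk hinv := by
    filter_upwards [(continuousAt_id.prodMk hΛ).eventually
      (hq.eventually_apply_eq_iff_implicitFunction hk hinv)] with x hx
    exact (hx.mp (by simp [hroot])).symm
  exact (hq.contDiffAt_implicitFunction hk hinv).congr_of_eventuallyEq hev

end Matrix

section BlockHessian

variable {ι n 𝕜 : Type*} [Fintype ι] [DecidableEq ι] [Fintype n] [RCLike 𝕜]

/-- `∇²𝒜(x)`: the entry at `((k, i), (l, j))` is `∂²𝒜ᵢⱼ/∂xₖ∂xₗ (x)`. -/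
noncomputable def blockHessian (A : EuclideanSpace ℝ ι → Matrix n n 𝕜) (x : EuclideanSpace ℝ ι) :
    Matrix (ι × n) (ι × n) 𝕜 :=
  of fun a b => iteratedFDeriv ℝ 2 (A · a.2 b.2) x
    ![EuclideanSpace.single a.1 1, EuclideanSpace.single b.1 1]

theorem fderiv_fderiv_re_star_dotProduct_mulVec_eq_blockHessian
    {A : EuclideanSpace ℝ ι → Matrix n n 𝕜} {x : EuclideanSpace ℝ ι}
    (hA : ∀ i j, ContDiffAt ℝ 2 (A · i j) x) (v : n → 𝕜) (p : EuclideanSpace ℝ ι) :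
    fderiv ℝ (fderiv ℝ fun y => RCLike.re (star v ⬝ᵥ A y *ᵥ v)) x p p =
      RCLike.re (star (fun a : ι × n => (p a.1 : 𝕜) * v a.2) ⬝ᵥ blockHessian A x *ᵥ
        (fun a => (p a.1 : 𝕜) * v a.2)) := by
  have hq := contDiffAt_star_dotProduct_mulVec hA v
  calc fderiv ℝ (fderiv ℝ fun y => RCLike.re (star v ⬝ᵥ A y *ᵥ v)) x p p
      = iteratedFDeriv ℝ 2 (RCLike.reCLM ∘ fun y => star v ⬝ᵥ A y *ᵥ v) x ![p, p] := by
        simp [iteratedFDeriv_two_apply, Function.comp_def]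
    _ = RCLike.re (star v ⬝ᵥ (of fun i j => iteratedFDeriv ℝ 2 (A · i j) x ![p, p]) *ᵥ v) := by
        rw [RCLike.reCLM.iteratedFDeriv_comp_left hq le_rfl]
        simp [iteratedFDeriv_star_dotProduct_mulVec hA]
    _ = _ := by
        rw [star_dotProduct_mulVec_kron _ (fun k => (p k : 𝕜))]
        congr 3
        ext i j
        simp [blockHessian, iteratedFDeriv_two_apply_eq_sum _ x p p, RCLike.real_smul_eq_coe_mul]

end BlockHessian

theorem stmt_17 {d n : ℕ}
    (A : EuclideanSpace ℝ (Fin d) → Matrix (Fin n) (Fin n) ℂ)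
    (hherm : ∀ ω, (A ω).IsHermitian)
    (hanal : ∀ i j, AnalyticOnNhd ℝ (fun ω => A ω i j) Set.univ)
    (Λ : EuclideanSpace ℝ (Fin d) → ℝ)
    (hΛ : ∀ ω, Λ ω = ⨅ i, (hherm ω).eigenvalues i)
    (ω0 : EuclideanSpace ℝ (Fin d))
    (hsimple : ∃! i, (hherm ω0).eigenvalues i = Λ ω0)
    (M : Matrix (Fin d × Fin n) (Fin d × Fin n) ℂ)
    (hM : ∀ (k l : Fin d) (i j : Fin n), M (k, i) (l, j) =
      iteratedFDeriv ℝ 2 (fun ω => A ω i j) ω0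
        ![EuclideanSpace.single k (1 : ℝ), EuclideanSpace.single l (1 : ℝ)])
    (hMherm : M.IsHermitian) :
    ∀ p : EuclideanSpace ℝ (Fin d),
      fderiv ℝ (fderiv ℝ Λ) ω0 p p ≤ (⨆ a, hMherm.eigenvalues a) * ‖p‖ ^ 2 := by
  intro p
  obtain rfl : Λ = fun ω => ⨅ i, (hherm ω).eigenvalues i := funext hΛ
  obtain rfl : M = blockHessian A ω0 := Matrix.ext fun a b => hM a.1 b.1 a.2 b.2
  have hA : ∀ i j, ContDiffAt ℝ 2 (A · i j) ω0 := fun i j => (hanal i j).contDiff.contDiffAt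
  obtain ⟨i₀, hi₀⟩ := hsimple.exists
  set v := ⇑((hherm ω0).eigenvectorBasis i₀)
  set w : Fin d × Fin n → ℂ := fun a => (p a.1 : ℂ) * v a.2
  have hφ : ContDiffAt ℝ 2 (fun ω => RCLike.re (star v ⬝ᵥ A ω *ᵥ v)) ω0 :=
    (RCLike.reCLM (K := ℂ)).contDiff.contDiffAt.comp ω0
      (Matrix.contDiffAt_star_dotProduct_mulVec hA v)
  calc fderiv ℝ (fderiv ℝ _) ω0 p p
      ≤ fderiv ℝ (fderiv ℝ fun ω => RCLike.re (star v ⬝ᵥ A ω *ᵥ v)) ω0 p p := by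
        refine fderiv_fderiv_apply_self_le_of_eventuallyLE (Eventually.of_forall fun ω => ?_)
          ?_ (Matrix.contDiffAt_iInf_eigenvalues hherm two_ne_zero hA hsimple) hφ p
        · simpa [v, Matrix.IsHermitian.sum_norm_eigenvectorBasis_sq] using
            (hherm ω).le_re_dotProduct_mulVec v
        · simp [v, Matrix.IsHermitian.re_star_dotProduct_mulVec_eigenvectorBasis, hi₀]
    _ = RCLike.re (star w ⬝ᵥ blockHessian A ω0 *ᵥ w) :=
        fderiv_fderiv_re_star_dotProduct_mulVec_eq_blockHessian hA v p
    _ ≤ (⨆ a, hMherm.eigenvalues a) * ∑ a, ‖w a‖ ^ 2 := hMherm.re_dotProduct_mulVec_le w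
    _ = (⨆ a, hMherm.eigenvalues a) * ‖p‖ ^ 2 := by
        simp [w, v, Fintype.sum_prod_type, mul_pow, ← mul_sum,
          Matrix.IsHermitian.sum_norm_eigenvectorBasis_sq, EuclideanSpace.norm_sq_eq]
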